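/- arXiv:2006.00590 — 6 statements merged into one kernel-verified Lean document; each statement's English description precedes it below -/
import Mathlib

section
/- Let c, m > 0, let t > 0 and let j be a positive integer with j ≤ √(t/(2cm)). Then Σ_{i=0}^{j-1} C(j,i)·c^{j-i}·t^i/(i!·m^i) ≤ 2c·j·t^{j-1}/((j-1)!·m^{j-1}). -/
open Finset
open scoped Nat

/-!
With `r = c m j² / t ≤ 1/2`, the `i`-th summand is at most `r ^ (j - 1 - i)` times half the
right-hand side, because `C(j,i) (j-1)! / i! ≤ j ^ (2 (j - 1 - i) + 1)`; the geometric series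
in `r` then sums to at most `2`.
-/

theorem Nat.choose_mul_factorial_le_factorial_mul_pow (i k : ℕ) :
    (i + k + 1).choose i * (i + k)! ≤ i ! * (i + k + 1) ^ (2 * k + 1) := by
  have hchoose : (i + k + 1).choose i ≤ (i + k + 1) ^ (k + 1) := by
    rw [← Nat.choose_symm (by omega), show i + k + 1 - i = k + 1 by omega]
    exact Nat.choose_le_pow _ _
  have hfact : (i + k)! ≤ i ! * (i + k + 1) ^ k := by
    rw [← Nat.factorial_mul_descFactorial (show k ≤ i + k by omega), Nat.add_sub_cancel]
    exact Nat.mul_le_mul_left _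
      ((Nat.descFactorial_le_pow _ _).trans (Nat.pow_le_pow_left (by omega) _))
  calc (i + k + 1).choose i * (i + k)!
      ≤ (i + k + 1) ^ (k + 1) * (i ! * (i + k + 1) ^ k) := Nat.mul_le_mul hchoose hfact
    _ = i ! * (i + k + 1) ^ (2 * k + 1) := by ring

section

variable {c m t : ℝ}

theorem choose_term_le_mul_pow (hc : 0 < c) (hm : 0 < m) (ht : 0 < t) {i j : ℕ}
    (hij : i < j) :
    (j.choose i : ℝ) * c ^ (j - i) * t ^ i / (i ! * m ^ i) ≤
      c * j * t ^ (j - 1) / ((j - 1)! * m ^ (j - 1)) * (c * m * j ^ 2 / t) ^ (j - 1 - i) := by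
  obtain ⟨k, rfl⟩ : ∃ k, j = i + k + 1 := ⟨j - 1 - i, by omega⟩
  rw [show i + k + 1 - i = k + 1 by omega, show i + k + 1 - 1 = i + k by omega,
    show i + k - i = k by omega]
  have hnat : ((i + k + 1).choose i : ℝ) * (i + k)! ≤
      i ! * ((i + k + 1 : ℕ) : ℝ) ^ (2 * k + 1) := by
    exact_mod_cast Nat.choose_mul_factorial_le_factorial_mul_pow i k
  rw [div_pow, mul_div_assoc', div_mul_eq_mul_div, div_div,
    div_le_div_iff₀ (by positivity) (by positivity)]
  calc ((i + k + 1).choose i : ℝ) * c ^ (k + 1) * t ^ i * ((i + k)! * m ^ (i + k) * t ^ k)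
      = ((i + k + 1).choose i * (i + k)!) * (c ^ (k + 1) * t ^ (i + k) * m ^ (i + k)) := by
        ring
    _ ≤ (i ! * ((i + k + 1 : ℕ) : ℝ) ^ (2 * k + 1)) *
          (c ^ (k + 1) * t ^ (i + k) * m ^ (i + k)) := by
      gcongr
    _ = c * ((i + k + 1 : ℕ) : ℝ) * t ^ (i + k) * (c * m * ((i + k + 1 : ℕ) : ℝ) ^ 2) ^ k
          * (i ! * m ^ i) := by ring

theorem mul_sq_div_le_half_of_le_sqrt (hc : 0 < c) (hm : 0 < m) (ht : 0 < t) {x : ℝ}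
    (hx : 0 ≤ x) (hxt : x ≤ √(t / (2 * c * m))) : c * m * x ^ 2 / t ≤ 1 / 2 := by
  have hsq : x ^ 2 ≤ t / (2 * c * m) := (Real.le_sqrt hx (by positivity)).mp hxt
  rw [le_div_iff₀ (by positivity)] at hsq
  rw [div_le_iff₀ ht]
  linarith

end

theorem stmt_5_general (c m t : ℝ) (hc : 0 < c) (hm : 0 < m) (ht : 0 < t)
    (j : ℕ) (hjt : (j : ℝ) ≤ Real.sqrt (t / (2 * c * m))) :
    ∑ i ∈ Finset.range j, (j.choose i : ℝ) * c ^ (j - i) * t ^ i / ((i.factorial : ℝ) * m ^ i) ≤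
      2 * c * (j : ℝ) * t ^ (j - 1) / (((j - 1).factorial : ℝ) * m ^ (j - 1)) := by
  set A := c * j * t ^ (j - 1) / ((j - 1)! * m ^ (j - 1))
  have hr : c * m * j ^ 2 / t ≤ 1 / 2 :=
    mul_sq_div_le_half_of_le_sqrt hc hm ht j.cast_nonneg hjt
  calc ∑ i ∈ range j, (j.choose i : ℝ) * c ^ (j - i) * t ^ i / (i ! * m ^ i)
      ≤ ∑ i ∈ range j, A * (c * m * j ^ 2 / t) ^ (j - 1 - i) :=
        sum_le_sum fun i hi => choose_term_le_mul_pow hc hm ht (mem_range.mp hi)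
    _ ≤ ∑ i ∈ range j, A * (1 / 2) ^ (j - 1 - i) := by gcongr
    _ = A * ∑ i ∈ range j, (1 / 2 : ℝ) ^ i := by
        rw [← mul_sum, sum_range_reflect (fun i => (1 / 2 : ℝ) ^ i) j]
    _ ≤ A * 2 := by gcongr; exact sum_geometric_two_le j
    _ = 2 * c * j * t ^ (j - 1) / ((j - 1)! * m ^ (j - 1)) := by ring

theorem stmt_5 (c m t : ℝ) (hc : 0 < c) (hm : 0 < m) (ht : 0 < t)
    (j : ℕ) (hj : 1 ≤ j) (hjt : (j : ℝ) ≤ Real.sqrt (t / (2 * c * m))) :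
    ∑ i ∈ Finset.range j, (j.choose i : ℝ) * c ^ (j - i) * t ^ i / ((i.factorial : ℝ) * m ^ i) ≤
      2 * c * (j : ℝ) * t ^ (j - 1) / (((j - 1).factorial : ℝ) * m ^ (j - 1)) :=
  stmt_5_general c m t hc hm ht j hjt
end

section
/- Let G : [0,∞) → [0,1] be a distribution function of a nonnegative random variable η with finite mean Eη, and m > 0. Define V̄(t) = (1/m)∫_0^t G(y) dy. Then (t - Eη)/m ≤ V̄(t) ≤ t/m for all t ≥ 0, and consequently the j-fold Stieltjes convolution V̄_j satisfies 0 ≤ t^j/(j!·m^j) - V̄_j(t) ≤ Σ_{i=0}^{j-1} C(j,i)·(Eη/m)^{j-i}·t^i/(i!·m^i) for all j ≥ 1 and t ≥ 0; in particular V̄_j(t) ≤ t^j/(j!·m^j). -/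
/-!
The measure `dV̄ = G(y)/m dy` has density at most `1/m`, and its deficit from `dy/m` has total
mass `∫₀^∞ (1 - G)/m = Eη/m` by the layer cake formula. Convolving with `dV̄` therefore turns
`tʲ/(j! mʲ)` into at most `tʲ⁺¹/((j+1)! mʲ⁺¹)`, which gives the upper bounds by induction. For the
lower bounds write `G = 1 - (1 - G)`: the error of `V̄ⱼ₊₁` is at most the convolved error of `V̄ⱼ`
plus `tʲ/(j! mʲ) · Eη/m`, and Pascal's rule shows that the binomial error sums are stable under
this recursion.
-/

open MeasureTheory Finset
open scoped ProbabilityTheory Nat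

section Tail

variable {Ω : Type*} [MeasurableSpace Ω] {μ : Measure Ω} {η : Ω → ℝ}

lemma MeasureTheory.Integrable.integrableOn_measureReal_lt (hη : Integrable η μ) (hη0 : 0 ≤ᵐ[μ] η) :
    IntegrableOn (fun y ↦ μ.real {ω | y < η ω}) (Set.Ioi 0) := by
  have hmeas : Measurable fun y : ℝ ↦ μ {ω | y < η ω} :=
    Antitone.measurable fun _ _ hab ↦ measure_mono fun _ hω ↦ hab.trans_lt hω
  refine ⟨hmeas.ennreal_toReal.aestronglyMeasurable, ?_⟩
  calc ∫⁻ y in Set.Ioi 0, ‖μ.real {ω | y < η ω}‖ₑ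
      ≤ ∫⁻ y in Set.Ioi 0, μ {ω | y < η ω} :=
        lintegral_mono fun y ↦ by
          rw [Real.enorm_eq_ofReal measureReal_nonneg]; exact ENNReal.ofReal_toReal_le
    _ = ∫⁻ ω, ENNReal.ofReal (η ω) ∂μ :=
        (lintegral_eq_lintegral_meas_lt μ hη0 hη.aemeasurable).symm
    _ < ⊤ := hη.lintegral_lt_top

lemma integral_measureReal_lt_le_integral (hη : Integrable η μ) (hη0 : 0 ≤ᵐ[μ] η) {t : ℝ}
    (ht : 0 ≤ t) : ∫ y in 0..t, μ.real {ω | y < η ω} ≤ ∫ ω, η ω ∂μ := by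
  rw [intervalIntegral.integral_of_le ht, hη.integral_eq_integral_meas_lt hη0]
  exact setIntegral_mono_set (hη.integrableOn_measureReal_lt hη0)
    (ae_of_all _ fun _ ↦ measureReal_nonneg) Set.Ioc_subset_Ioi_self.eventuallyLE

lemma integral_one_sub_measureReal_le_le_integral [IsProbabilityMeasure μ]
    (hη : Integrable η μ) (hη0 : 0 ≤ᵐ[μ] η) {t : ℝ} (ht : 0 ≤ t) :
    ∫ y in 0..t, (1 - μ.real {ω | η ω ≤ y}) ≤ ∫ ω, η ω ∂μ := by
  have hcompl (y : ℝ) : 1 - μ.real {ω | η ω ≤ y} = μ.real {ω | y < η ω} := by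
    rw [← probReal_compl_eq_one_sub₀
      (nullMeasurableSet_le hη.aemeasurable aemeasurable_const)]
    simp only [Set.compl_ofPred, not_le]
  simpa only [hcompl] using integral_measureReal_lt_le_integral hη hη0 ht

lemma monotone_measureReal_le [IsFiniteMeasure μ] :
    Monotone fun t ↦ μ.real {ω | η ω ≤ t} :=
  fun _ _ hab ↦ measureReal_mono fun _ hω ↦ le_trans hω hab

end Tail

noncomputable section

def powTerm (m : ℝ) (j : ℕ) (t : ℝ) : ℝ := t ^ j / (j ! * m ^ j)

def errBound (m e : ℝ) (j : ℕ) (t : ℝ) : ℝ :=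
  ∑ i ∈ range j, (j.choose i : ℝ) * (e / m) ^ (j - i) * powTerm m i t

-- The Stieltjes convolution `∫_{[0,t]} f (t - y) dV̄(y)` for `dV̄(y) = G y / m dy`.
def densityConv (m : ℝ) (G f : ℝ → ℝ) (t : ℝ) : ℝ :=
  ∫ y in 0..t, f (t - y) * (G y / m)

end

section

variable {m e t : ℝ} {G f : ℝ → ℝ}

lemma powTerm_nonneg (hm : 0 ≤ m) (ht : 0 ≤ t) (j : ℕ) : 0 ≤ powTerm m j t := by
  unfold powTerm; positivity

lemma powTerm_le_powTerm (hm : 0 ≤ m) {s : ℝ} (hs : 0 ≤ s) (hst : s ≤ t) (j : ℕ) :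
    powTerm m j s ≤ powTerm m j t := by
  unfold powTerm; gcongr

@[fun_prop]
lemma continuous_powTerm (m : ℝ) (j : ℕ) : Continuous (powTerm m j) := by
  unfold powTerm; fun_prop

lemma integral_powTerm_comp_sub (hm : m ≠ 0) (j : ℕ) :
    ∫ y in 0..t, powTerm m j (t - y) = m * powTerm m (j + 1) t := by
  simp only [powTerm, intervalIntegral.integral_div, intervalIntegral.integral_comp_sub_left
    (fun x ↦ x ^ j), sub_self, sub_zero, integral_pow, Nat.factorial_succ]
  push_cast
  field_simp
  ring

lemma errBound_nonneg (hm : 0 ≤ m) (he : 0 ≤ e) (ht : 0 ≤ t) (j : ℕ) : 0 ≤ errBound m e j t :=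
  sum_nonneg fun i _ ↦ by have := powTerm_nonneg hm ht i; positivity

lemma integral_errBound_comp_sub (hm : m ≠ 0) (j : ℕ) :
    ∫ y in 0..t, errBound m e j (t - y) =
      m * ∑ i ∈ range j, (j.choose i : ℝ) * (e / m) ^ (j - i) * powTerm m (i + 1) t := by
  have hint (i : ℕ) : IntervalIntegrable (fun y ↦ powTerm m i (t - y)) volume 0 t :=
    (by fun_prop : Continuous fun y ↦ powTerm m i (t - y)).intervalIntegrable _ _
  simp only [errBound]
  rw [intervalIntegral.integral_finsetSum fun i _ ↦ (hint i).const_mul _, mul_sum]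
  refine sum_congr rfl fun i _ ↦ ?_
  rw [intervalIntegral.integral_const_mul, integral_powTerm_comp_sub hm]
  ring

lemma errBound_succ (j : ℕ) :
    errBound m e (j + 1) t = e / m * (errBound m e j t + powTerm m j t) +
      ∑ i ∈ range j, (j.choose i : ℝ) * (e / m) ^ (j - i) * powTerm m (i + 1) t := by
  set c := e / m
  have hpascal : errBound m e (j + 1) t =
      (∑ i ∈ range j, (j.choose (i + 1) : ℝ) * c ^ (j - i) * powTerm m (i + 1) t +
        c ^ (j + 1) * powTerm m 0 t) +
      ∑ i ∈ range j, (j.choose i : ℝ) * c ^ (j - i) * powTerm m (i + 1) t := by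
    rw [errBound, sum_range_succ']
    simp only [Nat.choose_succ_succ, Nat.cast_add, add_mul, sum_add_distrib, Nat.choose_zero_right,
      Nat.add_sub_add_right, Nat.cast_one, one_mul, Nat.sub_zero]
    ring
  have hshift : c * (errBound m e j t + powTerm m j t) =
      ∑ i ∈ range j, (j.choose (i + 1) : ℝ) * c ^ (j - i) * powTerm m (i + 1) t +
        c ^ (j + 1) * powTerm m 0 t := by
    have hsum : errBound m e j t + powTerm m j t =
        ∑ i ∈ range (j + 1), (j.choose i : ℝ) * c ^ (j - i) * powTerm m i t := by
      simp [errBound, sum_range_succ, c]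
    rw [hsum, mul_sum, sum_range_succ']
    congr 1
    · refine sum_congr rfl fun i hi ↦ ?_
      rw [show j - i = j - (i + 1) + 1 by have := mem_range.1 hi; omega]
      ring
    · simp only [Nat.choose_zero_right, Nat.cast_one, Nat.sub_zero]
      ring
  rw [hpascal, hshift]

-- Monotonicity and nonnegativity make the next convolution integrable and monotone.
structure IsApproxPowTerm (m e : ℝ) (j : ℕ) (f : ℝ → ℝ) : Prop where
  monotoneOn : MonotoneOn f (Set.Ici 0)
  nonneg : ∀ t, 0 ≤ t → 0 ≤ f t
  le_powTerm : ∀ t, 0 ≤ t → f t ≤ powTerm m j t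
  powTerm_sub_le : ∀ t, 0 ≤ t → powTerm m j t - f t ≤ errBound m e j t

lemma IsApproxPowTerm.congr {j : ℕ} {g : ℝ → ℝ} (hf : IsApproxPowTerm m e j f)
    (hfg : Set.EqOn f g (Set.Ici 0)) : IsApproxPowTerm m e j g where
  monotoneOn := hf.monotoneOn.congr hfg
  nonneg t ht := hfg (Set.mem_Ici.2 ht) ▸ hf.nonneg t ht
  le_powTerm t ht := hfg (Set.mem_Ici.2 ht) ▸ hf.le_powTerm t ht
  powTerm_sub_le t ht := hfg (Set.mem_Ici.2 ht) ▸ hf.powTerm_sub_le t ht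

lemma intervalIntegrable_comp_sub_mul_div (hm : 0 < m) (hG : Measurable G) (hG0 : ∀ y, 0 ≤ G y)
    (hG1 : ∀ y, G y ≤ 1) (hf : MonotoneOn f (Set.Ici 0)) (ht : 0 ≤ t) {s : ℝ} (hts : t ≤ s) :
    IntervalIntegrable (fun y ↦ f (s - y) * (G y / m)) volume 0 t := by
  have hfs : IntervalIntegrable (fun y ↦ f (s - y)) volume 0 t := by
    refine AntitoneOn.intervalIntegrable fun a ha b hb hab ↦ hf ?_ ?_ (by linarith)
    all_goals
      simp only [Set.uIcc_of_le ht, Set.mem_Icc, Set.mem_Ici] at *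
      linarith
  have hbound (y : ℝ) : ‖G y / m‖ ≤ 1 / m := by
    rw [Real.norm_of_nonneg (div_nonneg (hG0 y) hm.le)]
    exact div_le_div_of_nonneg_right (hG1 y) hm.le
  rw [intervalIntegrable_iff] at hfs ⊢
  exact hfs.mul_bdd (hG.div_const m).aestronglyMeasurable (ae_of_all _ hbound)

lemma densityConv_nonneg (hm : 0 < m) (hG0 : ∀ y, 0 ≤ G y) (hf0 : ∀ t, 0 ≤ t → 0 ≤ f t)
    (ht : 0 ≤ t) : 0 ≤ densityConv m G f t :=
  intervalIntegral.integral_nonneg ht fun y hy ↦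
    mul_nonneg (hf0 _ (by linarith [hy.2])) (div_nonneg (hG0 y) hm.le)

lemma densityConv_monotoneOn (hm : 0 < m) (hG : Measurable G) (hG0 : ∀ y, 0 ≤ G y)
    (hG1 : ∀ y, G y ≤ 1) (hf : MonotoneOn f (Set.Ici 0)) (hf0 : ∀ t, 0 ≤ t → 0 ≤ f t) :
    MonotoneOn (densityConv m G f) (Set.Ici 0) := by
  intro a (ha : 0 ≤ a) b (hb : 0 ≤ b) hab
  have hint {t s : ℝ} (ht : 0 ≤ t) (hts : t ≤ s) :=
    intervalIntegrable_comp_sub_mul_div hm hG hG0 hG1 hf ht hts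
  calc ∫ y in 0..a, f (a - y) * (G y / m)
      ≤ ∫ y in 0..a, f (b - y) * (G y / m) :=
        intervalIntegral.integral_mono_on ha (hint ha le_rfl) (hint ha hab) fun y hy ↦
          mul_le_mul_of_nonneg_right
            (hf (by simp; linarith [hy.2]) (by simp; linarith [hy.2]) (by linarith))
            (div_nonneg (hG0 y) hm.le)
    _ ≤ ∫ y in 0..b, f (b - y) * (G y / m) :=
        intervalIntegral.integral_mono_interval le_rfl ha hab
          (ae_restrict_of_forall_mem measurableSet_Ioc fun y hy ↦
            mul_nonneg (hf0 _ (by linarith [hy.2])) (div_nonneg (hG0 y) hm.le))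
          (hint hb le_rfl)

lemma powTerm_succ_eq_integral (hm : 0 < m) (j : ℕ) :
    powTerm m (j + 1) t = ∫ y in 0..t, powTerm m j (t - y) / m := by
  rw [intervalIntegral.integral_div, integral_powTerm_comp_sub hm.ne']
  field_simp

lemma densityConv_le_powTerm (hm : 0 < m) (hG : Measurable G) (hG0 : ∀ y, 0 ≤ G y)
    (hG1 : ∀ y, G y ≤ 1) {j : ℕ} (hf : IsApproxPowTerm m e j f) (ht : 0 ≤ t) :
    densityConv m G f t ≤ powTerm m (j + 1) t := by
  rw [powTerm_succ_eq_integral hm]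
  refine intervalIntegral.integral_mono_on ht
    (intervalIntegrable_comp_sub_mul_div hm hG hG0 hG1 hf.monotoneOn ht le_rfl)
    ((by fun_prop : Continuous fun y ↦ powTerm m j (t - y) / m).intervalIntegrable _ _)
    fun y hy ↦ ?_
  have hty : 0 ≤ t - y := by linarith [hy.2]
  rw [← mul_div_assoc]
  gcongr
  exact (mul_le_of_le_one_right (hf.nonneg _ hty) (hG1 y)).trans (hf.le_powTerm _ hty)

lemma powTerm_sub_densityConv_le (hm : 0 < m) (hG : Monotone G) (hG0 : ∀ y, 0 ≤ G y)
    (hG1 : ∀ y, G y ≤ 1) (he : ∀ t, 0 ≤ t → ∫ y in 0..t, (1 - G y) ≤ e) {j : ℕ}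
    (hf : IsApproxPowTerm m e j f) (ht : 0 ≤ t) :
    powTerm m (j + 1) t - densityConv m G f t ≤ errBound m e (j + 1) t := by
  have he0 : 0 ≤ e := by simpa using he 0 le_rfl
  have hpow_int : IntervalIntegrable (fun y ↦ powTerm m j (t - y) / m) volume 0 t :=
    (by fun_prop : Continuous fun y ↦ powTerm m j (t - y) / m).intervalIntegrable _ _
  have herr_int : IntervalIntegrable (fun y ↦ errBound m e j (t - y)) volume 0 t :=
    (by unfold errBound; fun_prop :
      Continuous fun y ↦ errBound m e j (t - y)).intervalIntegrable _ _
  have hG_int : IntervalIntegrable (fun y ↦ 1 - G y) volume 0 t :=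
    intervalIntegrable_const.sub hG.intervalIntegrable
  -- split `G` as `1 - (1 - G)`: the first part sees the error of `f`, the second the tail of `G`
  have hpointwise : ∀ y ∈ Set.Icc 0 t, powTerm m j (t - y) / m - f (t - y) * (G y / m) ≤
      (errBound m e j (t - y) + powTerm m j t * (1 - G y)) / m := by
    intro y hy
    have hty : 0 ≤ t - y := by linarith [hy.2]
    rw [← mul_div_assoc, ← sub_div]
    gcongr
    calc powTerm m j (t - y) - f (t - y) * G y
        = (powTerm m j (t - y) - f (t - y)) * G y + powTerm m j (t - y) * (1 - G y) := by ring
      _ ≤ errBound m e j (t - y) + powTerm m j t * (1 - G y) :=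
        add_le_add
          ((mul_le_of_le_one_right (sub_nonneg.2 (hf.le_powTerm _ hty)) (hG1 y)).trans
            (hf.powTerm_sub_le _ hty))
          (mul_le_mul_of_nonneg_right (powTerm_le_powTerm hm.le hty (by linarith [hy.1]) j)
            (sub_nonneg.2 (hG1 y)))
  calc powTerm m (j + 1) t - densityConv m G f t
      = ∫ y in 0..t, (powTerm m j (t - y) / m - f (t - y) * (G y / m)) := by
        rw [powTerm_succ_eq_integral hm, densityConv, intervalIntegral.integral_sub hpow_int
          (intervalIntegrable_comp_sub_mul_div hm hG.measurable hG0 hG1 hf.monotoneOn ht le_rfl)]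
    _ ≤ ∫ y in 0..t, (errBound m e j (t - y) + powTerm m j t * (1 - G y)) / m :=
        intervalIntegral.integral_mono_on ht (hpow_int.sub
          (intervalIntegrable_comp_sub_mul_div hm hG.measurable hG0 hG1 hf.monotoneOn ht le_rfl))
          ((herr_int.add (hG_int.const_mul _)).div_const _) hpointwise
    _ = (m * ∑ i ∈ range j, (j.choose i : ℝ) * (e / m) ^ (j - i) * powTerm m (i + 1) t +
          powTerm m j t * ∫ y in 0..t, (1 - G y)) / m := by
        rw [intervalIntegral.integral_div, intervalIntegral.integral_add herr_int
          (hG_int.const_mul _), intervalIntegral.integral_const_mul,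
          integral_errBound_comp_sub hm.ne']
    _ ≤ (m * ∑ i ∈ range j, (j.choose i : ℝ) * (e / m) ^ (j - i) * powTerm m (i + 1) t +
          powTerm m j t * e) / m := by
        gcongr
        · exact powTerm_nonneg hm.le ht j
        · exact he t ht
    _ ≤ errBound m e (j + 1) t := by
        have := mul_nonneg he0 (errBound_nonneg hm.le he0 ht j)
        rw [errBound_succ]
        field_simp
        linarith

lemma IsApproxPowTerm.densityConv (hm : 0 < m) (hG : Monotone G) (hG0 : ∀ y, 0 ≤ G y)
    (hG1 : ∀ y, G y ≤ 1) (he : ∀ t, 0 ≤ t → ∫ y in 0..t, (1 - G y) ≤ e) {j : ℕ}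
    (hf : IsApproxPowTerm m e j f) : IsApproxPowTerm m e (j + 1) (densityConv m G f) where
  monotoneOn := densityConv_monotoneOn hm hG.measurable hG0 hG1 hf.monotoneOn hf.nonneg
  nonneg _ ht := densityConv_nonneg hm hG0 hf.nonneg ht
  le_powTerm _ ht := densityConv_le_powTerm hm hG.measurable hG0 hG1 hf ht
  powTerm_sub_le _ ht := powTerm_sub_densityConv_le hm hG hG0 hG1 he hf ht

lemma powTerm_one : powTerm m 1 t = t / m := by simp [powTerm]

lemma errBound_one : errBound m e 1 t = e / m := by simp [errBound, powTerm]

lemma isApproxPowTerm_one (hm : 0 < m) (hG : Monotone G) (hG0 : ∀ y, 0 ≤ G y)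
    (hG1 : ∀ y, G y ≤ 1) (he : ∀ t, 0 ≤ t → ∫ y in 0..t, (1 - G y) ≤ e) :
    IsApproxPowTerm m e 1 fun t ↦ 1 / m * ∫ y in 0..t, G y where
  monotoneOn a (ha : 0 ≤ a) b _ hab :=
    mul_le_mul_of_nonneg_left (intervalIntegral.integral_mono_interval le_rfl ha hab
      (ae_of_all _ hG0) hG.intervalIntegrable) (one_div_nonneg.2 hm.le)
  nonneg t ht :=
    mul_nonneg (one_div_nonneg.2 hm.le) (intervalIntegral.integral_nonneg ht fun y _ ↦ hG0 y)
  le_powTerm t ht := by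
    rw [powTerm_one, one_div_mul_eq_div]
    gcongr
    simpa using intervalIntegral.integral_mono_on (μ := volume) ht hG.intervalIntegrable
      intervalIntegrable_const fun y _ ↦ hG1 y
  powTerm_sub_le t ht := by
    rw [powTerm_one, errBound_one, one_div_mul_eq_div, ← sub_div]
    gcongr
    have htail := he t ht
    rw [intervalIntegral.integral_sub intervalIntegrable_const hG.intervalIntegrable,
      intervalIntegral.integral_const, sub_zero, smul_eq_mul, mul_one] at htail
    linarith

end

theorem stmt_7_general {Ω : Type*} [MeasureSpace Ω] [IsProbabilityMeasure (ℙ : Measure Ω)]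
    (η : Ω → ℝ) (hηnn : ∀ ω, 0 ≤ η ω) (hηint : Integrable η)
    (m : ℝ) (hm : 0 < m)
    (G : ℝ → ℝ) (hG : ∀ t : ℝ, G t = (ℙ {ω | η ω ≤ t}).toReal)
    (Vbar : ℝ → ℝ) (hVbar : ∀ t : ℝ, Vbar t = (1 / m) * ∫ y in (0:ℝ)..t, G y)
    (Vb : ℕ → ℝ → ℝ)
    (hVb1 : ∀ t : ℝ, Vb 1 t = Vbar t)
    (hVbrec : ∀ j : ℕ, 2 ≤ j → ∀ t : ℝ, 0 ≤ t →
      Vb j t = ∫ y in (0:ℝ)..t, Vb (j - 1) (t - y) * (G y / m)) :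
    (∀ t : ℝ, 0 ≤ t → (t - ∫ ω, η ω) / m ≤ Vbar t ∧ Vbar t ≤ t / m) ∧
    (∀ j : ℕ, 1 ≤ j → ∀ t : ℝ, 0 ≤ t →
      0 ≤ t ^ j / ((j.factorial : ℝ) * m ^ j) - Vb j t ∧
      t ^ j / ((j.factorial : ℝ) * m ^ j) - Vb j t ≤
        ∑ i ∈ Finset.range j,
          (j.choose i : ℝ) * ((∫ ω, η ω) / m) ^ (j - i) * t ^ i / ((i.factorial : ℝ) * m ^ i)) := by
  have hG' : G = fun t ↦ (ℙ : Measure Ω).real {ω | η ω ≤ t} := funext hG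
  have hGmono : Monotone G := hG' ▸ monotone_measureReal_le
  have hG0 (y : ℝ) : 0 ≤ G y := hG' ▸ measureReal_nonneg
  have hG1 (y : ℝ) : G y ≤ 1 := hG' ▸ measureReal_le_one
  have htail (t : ℝ) (ht : 0 ≤ t) : ∫ y in 0..t, (1 - G y) ≤ ∫ ω, η ω :=
    hG' ▸ integral_one_sub_measureReal_le_le_integral hηint (ae_of_all _ hηnn) ht
  have hbase : IsApproxPowTerm m (∫ ω, η ω) 1 Vbar :=
    (isApproxPowTerm_one hm hGmono hG0 hG1 htail).congr fun t _ ↦ (hVbar t).symm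
  have hall (j : ℕ) (hj : 1 ≤ j) : IsApproxPowTerm m (∫ ω, η ω) j (Vb j) := by
    induction j, hj using Nat.le_induction with
    | base => exact hbase.congr fun t _ ↦ (hVb1 t).symm
    | succ j hj ih =>
      exact (ih.densityConv hm hGmono hG0 hG1 htail).congr fun t ht ↦
        (hVbrec (j + 1) (by omega) t ht).symm
  refine ⟨fun t ht ↦ ?_, fun j hj t ht ↦ ?_⟩
  · have hle := hbase.le_powTerm t ht
    have hsub := hbase.powTerm_sub_le t ht
    rw [powTerm_one] at hle hsub
    rw [errBound_one] at hsub
    exact ⟨by rw [sub_div]; linarith, hle⟩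
  · exact ⟨sub_nonneg.2 ((hall j hj).le_powTerm t ht), by
      simpa only [errBound, powTerm, mul_div_assoc] using (hall j hj).powTerm_sub_le t ht⟩

theorem stmt_7 {Ω : Type*} [MeasureSpace Ω] [IsProbabilityMeasure (ℙ : Measure Ω)]
    (η : Ω → ℝ) (hηmeas : Measurable η) (hηnn : ∀ ω, 0 ≤ η ω) (hηint : Integrable η)
    (m : ℝ) (hm : 0 < m)
    (G : ℝ → ℝ) (hG : ∀ t : ℝ, G t = (ℙ {ω | η ω ≤ t}).toReal)
    (Vbar : ℝ → ℝ) (hVbar : ∀ t : ℝ, Vbar t = (1 / m) * ∫ y in (0:ℝ)..t, G y)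
    (Vb : ℕ → ℝ → ℝ)
    (hVb1 : ∀ t : ℝ, Vb 1 t = Vbar t)
    (hVbrec : ∀ j : ℕ, 2 ≤ j → ∀ t : ℝ, 0 ≤ t →
      Vb j t = ∫ y in (0:ℝ)..t, Vb (j - 1) (t - y) * (G y / m)) :
    (∀ t : ℝ, 0 ≤ t → (t - ∫ ω, η ω) / m ≤ Vbar t ∧ Vbar t ≤ t / m) ∧
    (∀ j : ℕ, 1 ≤ j → ∀ t : ℝ, 0 ≤ t →
      0 ≤ t ^ j / ((j.factorial : ℝ) * m ^ j) - Vb j t ∧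
      t ^ j / ((j.factorial : ℝ) * m ^ j) - Vb j t ≤
        ∑ i ∈ Finset.range j,
          (j.choose i : ℝ) * ((∫ ω, η ω) / m) ^ (j - i) * t ^ i / ((i.factorial : ℝ) * m ^ i)) :=
  stmt_7_general η hηnn hηint m hm G hG Vbar hVbar Vb hVb1 hVbrec
end

section
/- Let (j_n) be a sequence of positive reals with j_n → ∞ and j_n = o(log n) as n → ∞, and fix u > 0. Then Σ_{i=0}^{⌊j_n u⌋ - 1} (log n)^i / i! ~ (log n)^{⌊j_n u⌋ - 1} / (⌊j_n u⌋ - 1)! as n → ∞, i.e., the ratio of the two sides tends to 1. -/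
/-!
With `k = ⌊j u⌋₊` and `L = log n`, going down from the last term `L^(k-1)/(k-1)!` of the sum,
each step multiplies a term by at most `(k-1)/L`. The sum is therefore squeezed between its
last term and that term times the geometric series `1/(1 - (k-1)/L)`, and `(k-1)/L → 0`
because `j = o(log n)`.
-/

open Filter Asymptotics Finset

lemma Nat.factorial_add_le_factorial_mul_pow (i m : ℕ) :
    (i + m).factorial ≤ i.factorial * (i + m) ^ m := by
  have h := Nat.factorial_mul_descFactorial (Nat.le_add_left m i)
  rw [Nat.add_sub_cancel] at h
  rw [← h]
  exact Nat.mul_le_mul_left _ (Nat.descFactorial_le_pow _ _)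

lemma pow_div_factorial_le_mul_pow {L : ℝ} (hL : 0 < L) (i m : ℕ) :
    L ^ i / (i.factorial : ℝ) ≤
      L ^ (i + m) / ((i + m).factorial : ℝ) * (((i + m : ℕ) : ℝ) / L) ^ m := by
  have hfact : ((i + m).factorial : ℝ) ≤ (i.factorial : ℝ) * ((i + m : ℕ) : ℝ) ^ m := by
    exact_mod_cast Nat.factorial_add_le_factorial_mul_pow i m
  calc L ^ i / (i.factorial : ℝ)
      ≤ L ^ i * (((i + m : ℕ) : ℝ) ^ m / ((i + m).factorial : ℝ)) := by
        rw [div_eq_mul_one_div]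
        gcongr L ^ i * ?_
        rw [div_le_div_iff₀ (by positivity) (by positivity)]
        linarith
    _ = L ^ (i + m) / ((i + m).factorial : ℝ) * (((i + m : ℕ) : ℝ) / L) ^ m := by
        rw [div_pow, pow_add]
        field_simp

lemma sum_range_pow_div_factorial_le {L : ℝ} (hL : 0 < L) {k : ℕ}
    (hkL : ((k - 1 : ℕ) : ℝ) < L) :
    ∑ i ∈ range k, L ^ i / (i.factorial : ℝ) ≤
      L ^ (k - 1) / ((k - 1).factorial : ℝ) / (1 - ((k - 1 : ℕ) : ℝ) / L) := by
  set r := ((k - 1 : ℕ) : ℝ) / L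
  have hr : 0 ≤ r := by positivity
  have hr1 : r < 1 := (div_lt_one hL).2 hkL
  have hterm : ∀ i ∈ range k,
      L ^ i / (i.factorial : ℝ) ≤ L ^ (k - 1) / ((k - 1).factorial : ℝ) * r ^ (k - 1 - i) := by
    intro i hi
    have hsplit : k - 1 = i + (k - 1 - i) := by grind
    have := pow_div_factorial_le_mul_pow hL i (k - 1 - i)
    rwa [← hsplit] at this
  have hgeom : ∑ i ∈ range k, r ^ i ≤ 1 / (1 - r) := by
    simpa using geom_sum_Ico_le_of_lt_one (m := 0) (n := k) hr hr1
  calc ∑ i ∈ range k, L ^ i / (i.factorial : ℝ)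
      ≤ ∑ i ∈ range k, L ^ (k - 1) / ((k - 1).factorial : ℝ) * r ^ (k - 1 - i) :=
        sum_le_sum hterm
    _ = L ^ (k - 1) / ((k - 1).factorial : ℝ) * ∑ i ∈ range k, r ^ i := by
        rw [mul_sum, ← sum_range_reflect (fun i => _ * r ^ i) k]
    _ ≤ L ^ (k - 1) / ((k - 1).factorial : ℝ) * (1 / (1 - r)) := by gcongr
    _ = L ^ (k - 1) / ((k - 1).factorial : ℝ) / (1 - r) := by ring

lemma one_le_sum_range_pow_div_factorial_div {L : ℝ} (hL : 0 < L) {k : ℕ} (hk : k ≠ 0) :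
    1 ≤ (∑ i ∈ range k, L ^ i / (i.factorial : ℝ)) /
      (L ^ (k - 1) / ((k - 1).factorial : ℝ)) := by
  rw [one_le_div (by positivity)]
  exact single_le_sum (f := fun i => L ^ i / (i.factorial : ℝ))
    (fun i _ => by positivity) (mem_range.2 (Nat.sub_lt (Nat.pos_of_ne_zero hk) one_pos))

lemma sum_range_pow_div_factorial_div_le {L : ℝ} (hL : 0 < L) {k : ℕ}
    (hkL : ((k - 1 : ℕ) : ℝ) < L) :
    (∑ i ∈ range k, L ^ i / (i.factorial : ℝ)) / (L ^ (k - 1) / ((k - 1).factorial : ℝ)) ≤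
      1 / (1 - ((k - 1 : ℕ) : ℝ) / L) := by
  rw [div_le_iff₀ (by positivity), one_div_mul_eq_div]
  exact sum_range_pow_div_factorial_le hL hkL

theorem stmt_8_general (j : ℕ → ℝ)
    (hjtop : Tendsto j atTop atTop)
    (hjo : j =o[atTop] fun n : ℕ => Real.log n)
    (u : ℝ) (hu : 0 < u) :
    Tendsto (fun n : ℕ =>
      (∑ i ∈ Finset.range ⌊j n * u⌋₊, (Real.log n) ^ i / (i.factorial : ℝ)) /
        ((Real.log n) ^ (⌊j n * u⌋₊ - 1) / ((⌊j n * u⌋₊ - 1).factorial : ℝ)))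
      atTop (nhds 1) := by
  set r : ℕ → ℝ := fun n => ((⌊j n * u⌋₊ - 1 : ℕ) : ℝ) / Real.log n
  have hlog : ∀ᶠ n : ℕ in atTop, 0 < Real.log n :=
    (Real.tendsto_log_atTop.comp tendsto_natCast_atTop_atTop).eventually_gt_atTop 0
  have hju : ∀ᶠ n in atTop, 1 ≤ j n * u :=
    (hjtop.atTop_mul_const hu).eventually_ge_atTop 1
  have hr : Tendsto r atTop (nhds 0) := by
    have hjlog : Tendsto (fun n => j n / Real.log n * u) atTop (nhds 0) := by
      simpa using hjo.tendsto_div_nhds_zero.mul_const u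
    refine squeeze_zero' ?_ ?_ hjlog
    · filter_upwards [hlog] with n hn using by positivity
    · filter_upwards [hlog, hju] with n hn hjun
      dsimp only [r]
      rw [div_mul_eq_mul_div]
      gcongr
      exact (Nat.cast_le.2 (Nat.sub_le _ 1)).trans (Nat.floor_le (by linarith))
  have hbound : Tendsto (fun n => 1 / (1 - r n)) atTop (nhds 1) := by
    simpa using ((tendsto_const_nhds (x := (1 : ℝ))).sub hr).inv₀ (by norm_num)
  refine tendsto_of_tendsto_of_tendsto_of_le_of_le' tendsto_const_nhds hbound ?_ ?_
  · filter_upwards [hlog, hju] with n hn hjun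
    exact one_le_sum_range_pow_div_factorial_div hn (Nat.floor_pos.2 hjun).ne'
  · filter_upwards [hlog, hr.eventually_lt_const one_pos] with n hn hrn
    exact sum_range_pow_div_factorial_div_le hn ((div_lt_one hn).1 hrn)

theorem stmt_8 (j : ℕ → ℝ) (hjpos : ∀ n, 0 < j n)
    (hjtop : Tendsto j atTop atTop)
    (hjo : j =o[atTop] fun n : ℕ => Real.log n)
    (u : ℝ) (hu : 0 < u) :
    Tendsto (fun n : ℕ =>
      (∑ i ∈ Finset.range ⌊j n * u⌋₊, (Real.log n) ^ i / (i.factorial : ℝ)) /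
        ((Real.log n) ^ (⌊j n * u⌋₊ - 1) / ((⌊j n * u⌋₊ - 1).factorial : ℝ)))
      atTop (nhds 1) :=
  stmt_8_general j hjtop hjo u hu
end

section
/- Define D_j : [0,∞) → ℝ recursively by D_0(t) = 0 and D_j(t) ≤ ∫_0^t D_{j-1}(y) dy + t^{2j-2}/((j-1)!)² + 5t^{2j-1}/(((j-1)!)²(2j-1)) for j ≥ 1. Then for all j ≥ 1 and t ≥ 0, D_j(t) ≤ Σ_{i=0}^{j-1} (t^{j-1+i}/(i!)²)·((2i)!/(j-1+i)!) + 5·Σ_{i=0}^{j-1} (t^{j+i}/(i!)²)·((2i)!/(j+i)!). -/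
/-!
Write `a n i t = boundTerm n i t = t ^ (n + i) / (i !) ^ 2 * ((2 i)! / (n + i)!)`. Integrating
over `[0, t]` raises `n` by one, and the two inhomogeneous terms of the recursion for `D (n + 1)`
are exactly the diagonal terms `a n n t` and `a (n + 1) n t`. So if `D n` is bounded by
`∑_{i < n} a (n - 1) i + 5 ∑_{i < n} a n i`, integrating and adding the two new terms extends both
sums by their `i = n` summand.
-/

open Finset intervalIntegral
open scoped Nat

noncomputable def boundTerm (n i : ℕ) (t : ℝ) : ℝ :=
  t ^ (n + i) / (i ! : ℝ) ^ 2 * ((2 * i)! / (n + i)!)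

noncomputable def boundSum (n m : ℕ) (t : ℝ) : ℝ :=
  ∑ i ∈ range m, boundTerm n i t

@[fun_prop]
lemma continuous_boundTerm (n i : ℕ) : Continuous (boundTerm n i) := by
  unfold boundTerm
  fun_prop

@[fun_prop]
lemma continuous_boundSum (n m : ℕ) : Continuous (boundSum n m) := by
  unfold boundSum
  fun_prop

lemma integral_boundTerm (n i : ℕ) (t : ℝ) :
    ∫ y in (0 : ℝ)..t, boundTerm n i y = boundTerm (n + 1) i t := by
  have hfac : ((n + 1 + i)! : ℝ) = (n + i + 1 : ℝ) * (n + i)! := by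
    rw [add_right_comm, Nat.factorial_succ]
    push_cast
    ring
  simp only [boundTerm, integral_mul_const, integral_div, integral_pow, hfac]
  rw [add_right_comm n 1 i]
  field_simp
  push_cast
  ring

lemma integral_boundSum (n m : ℕ) (t : ℝ) :
    ∫ y in (0 : ℝ)..t, boundSum n m y = boundSum (n + 1) m t := by
  unfold boundSum
  rw [integral_finsetSum fun i _ => (continuous_boundTerm n i).intervalIntegrable _ _]
  exact sum_congr rfl fun i _ => integral_boundTerm n i t

lemma boundTerm_self (n : ℕ) (t : ℝ) : boundTerm n n t = t ^ (2 * n) / (n ! : ℝ) ^ 2 := by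
  rw [boundTerm, ← two_mul, div_self (by positivity), mul_one]

lemma boundTerm_succ_self (n : ℕ) (t : ℝ) :
    boundTerm (n + 1) n t = t ^ (2 * n + 1) / ((n ! : ℝ) ^ 2 * (2 * n + 1)) := by
  have hfac : ((n + 1 + n)! : ℝ) = (2 * n + 1 : ℝ) * (2 * n)! := by
    rw [show n + 1 + n = 2 * n + 1 by ring, Nat.factorial_succ]
    push_cast
    ring
  rw [boundTerm, hfac, show n + 1 + n = 2 * n + 1 by ring]
  field_simp

lemma le_boundSum_succ {f g : ℝ → ℝ} {n : ℕ} {t : ℝ}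
    (hf : f t ≤ (∫ y in (0 : ℝ)..t, g y) + t ^ (2 * n) / (n ! : ℝ) ^ 2
      + 5 * t ^ (2 * n + 1) / ((n ! : ℝ) ^ 2 * (2 * n + 1)))
    (hg : ∫ y in (0 : ℝ)..t, g y ≤ boundSum n n t + 5 * boundSum (n + 1) n t) :
    f t ≤ boundSum n (n + 1) t + 5 * boundSum (n + 1) (n + 1) t := by
  rw [boundSum, boundSum, sum_range_succ, sum_range_succ, boundTerm_self, boundTerm_succ_self]
  rw [boundSum, boundSum] at hg
  rw [mul_div_assoc] at hf
  linarith

theorem stmt_15_general (D : ℕ → ℝ → ℝ)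
    (hDcont : ∀ j, Continuous (D j))
    (hD0 : ∀ t : ℝ, D 0 t = 0)
    (hDrec : ∀ j : ℕ, 1 ≤ j → ∀ t : ℝ, 0 ≤ t →
      D j t ≤ (∫ y in (0:ℝ)..t, D (j - 1) y)
        + t ^ (2 * j - 2) / ((j - 1).factorial : ℝ) ^ 2
        + 5 * t ^ (2 * j - 1) / (((j - 1).factorial : ℝ) ^ 2 * (2 * (j : ℝ) - 1))) :
    ∀ j : ℕ, 1 ≤ j → ∀ t : ℝ, 0 ≤ t →
      D j t ≤
        (∑ i ∈ Finset.range j,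
          t ^ (j - 1 + i) / ((i.factorial : ℝ)) ^ 2 * (((2 * i).factorial : ℝ) / ((j - 1 + i).factorial : ℝ)))
        + 5 * ∑ i ∈ Finset.range j,
          t ^ (j + i) / ((i.factorial : ℝ)) ^ 2 * (((2 * i).factorial : ℝ) / ((j + i).factorial : ℝ)) := by
  have hrec (n : ℕ) (t : ℝ) (ht : 0 ≤ t) : D (n + 1) t ≤ (∫ y in (0 : ℝ)..t, D n y)
      + t ^ (2 * n) / (n ! : ℝ) ^ 2 + 5 * t ^ (2 * n + 1) / ((n ! : ℝ) ^ 2 * (2 * n + 1)) := by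
    have h := hDrec (n + 1) (by omega) t ht
    rwa [show 2 * (n + 1) - 2 = 2 * n by omega, show 2 * (n + 1) - 1 = 2 * n + 1 by omega,
      Nat.add_sub_cancel, Nat.cast_succ, show 2 * ((n : ℝ) + 1) - 1 = 2 * n + 1 by ring] at h
  have hbound (n : ℕ) (t : ℝ) (ht : 0 ≤ t) :
      D (n + 1) t ≤ boundSum n (n + 1) t + 5 * boundSum (n + 1) (n + 1) t := by
    induction n generalizing t with
    | zero => exact le_boundSum_succ (hrec 0 t ht) (by simp [hD0, boundSum])
    | succ n ih =>
      refine le_boundSum_succ (hrec (n + 1) t ht) ?_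
      calc ∫ y in (0 : ℝ)..t, D (n + 1) y
          ≤ ∫ y in (0 : ℝ)..t, boundSum n (n + 1) y + 5 * boundSum (n + 1) (n + 1) y :=
            integral_mono_on ht ((hDcont _).intervalIntegrable _ _)
              ((by fun_prop : Continuous _).intervalIntegrable _ _) fun y hy => ih y hy.1
        _ = boundSum (n + 1) (n + 1) t + 5 * boundSum (n + 2) (n + 1) t := by
            rw [integral_add ((by fun_prop : Continuous _).intervalIntegrable _ _)
              ((by fun_prop : Continuous _).intervalIntegrable _ _), integral_const_mul,
              integral_boundSum, integral_boundSum]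
  intro j hj t ht
  obtain ⟨n, rfl⟩ := Nat.exists_eq_add_of_le' hj
  simpa [boundSum, boundTerm] using hbound n t ht

theorem stmt_15 (D : ℕ → ℝ → ℝ)
    (hDcont : ∀ j, Continuous (D j))
    (hDnn : ∀ j (t : ℝ), 0 ≤ t → 0 ≤ D j t)
    (hD0 : ∀ t : ℝ, D 0 t = 0)
    (hDrec : ∀ j : ℕ, 1 ≤ j → ∀ t : ℝ, 0 ≤ t →
      D j t ≤ (∫ y in (0:ℝ)..t, D (j - 1) y)
        + t ^ (2 * j - 2) / ((j - 1).factorial : ℝ) ^ 2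
        + 5 * t ^ (2 * j - 1) / (((j - 1).factorial : ℝ) ^ 2 * (2 * (j : ℝ) - 1))) :
    ∀ j : ℕ, 1 ≤ j → ∀ t : ℝ, 0 ≤ t →
      D j t ≤
        (∑ i ∈ Finset.range j,
          t ^ (j - 1 + i) / ((i.factorial : ℝ)) ^ 2 * (((2 * i).factorial : ℝ) / ((j - 1 + i).factorial : ℝ)))
        + 5 * ∑ i ∈ Finset.range j,
          t ^ (j + i) / ((i.factorial : ℝ)) ^ 2 * (((2 * i).factorial : ℝ) / ((j + i).factorial : ℝ)) :=
  stmt_15_general D hDcont hD0 hDrec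
end

section
/- For i, j positive integers with i ≤ j-3, define A(i,j) = (j!)²(2i)!/((i!)²(j+i)!·j²). Then A(i,j) ≤ √2·e·4^i·√j·(j/e)^{j-i-2}. -/
/-!
Bounding `(2i)!` by `4^i (i!)²` (the central binomial coefficient is at most `4^i`) and `(j+i)!`
from below by `j! j^i` reduces the quotient to `4^i j! / j^(i+2)`, and the upper Stirling bound
`j! ≤ e √j (j/e)^j` finishes, since `(j/e)^(i+2) ≤ j^(i+2)`.
-/

open Nat Real

theorem Nat.factorial_two_mul_le_four_pow_mul_sq (n : ℕ) : (2 * n)! ≤ 4 ^ n * n ! ^ 2 := by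
  have h := choose_mul_factorial_mul_factorial (show n ≤ 2 * n by omega)
  rw [show 2 * n - n = n by omega] at h
  calc (2 * n)! = centralBinom n * n ! ^ 2 := by rw [← h, centralBinom]; ring
    _ ≤ 4 ^ n * n ! ^ 2 := Nat.mul_le_mul_right _ (centralBinom_le_four_pow n)

theorem Nat.factorial_mul_pow_le_factorial_add (m n : ℕ) : m ! * m ^ n ≤ (m + n)! :=
  (Nat.mul_le_mul_left _ (Nat.pow_le_pow_left m.le_succ n)).trans factorial_mul_pow_le_factorial

namespace Stirling

/-- `stirlingSeq` is antitone from `stirlingSeq 1 = e / √2`. -/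
theorem factorial_le_exp_one_mul_sqrt_mul_pow {n : ℕ} (hn : n ≠ 0) :
    (n ! : ℝ) ≤ exp 1 * √n * (n / exp 1) ^ n := by
  have hanti : stirlingSeq n ≤ stirlingSeq 1 := by
    obtain ⟨m, rfl⟩ := Nat.exists_eq_succ_of_ne_zero hn
    exact stirlingSeq'_antitone (Nat.zero_le m)
  have hpos : 0 < √(2 * n : ℝ) * (n / exp 1) ^ n := by
    have : (0 : ℝ) < n := by positivity
    positivity
  rw [stirlingSeq_one, stirlingSeq, div_le_iff₀ hpos] at hanti
  calc (n ! : ℝ) ≤ exp 1 / √2 * (√(2 * n : ℝ) * (n / exp 1) ^ n) := hanti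
    _ = exp 1 * √n * (n / exp 1) ^ n := by
      rw [Real.sqrt_mul zero_le_two]
      field_simp

theorem factorial_le_exp_one_mul_sqrt_mul_pow_sub_mul_pow {n k : ℕ} (hn : n ≠ 0) (hk : k ≤ n) :
    (n ! : ℝ) ≤ exp 1 * √n * (n / exp 1) ^ (n - k) * (n : ℝ) ^ k := by
  have hdiv : (n / exp 1 : ℝ) ^ k ≤ (n : ℝ) ^ k := by
    gcongr
    exact div_le_self (by positivity) (one_le_exp zero_le_one)
  calc (n ! : ℝ) ≤ exp 1 * √n * (n / exp 1) ^ n := factorial_le_exp_one_mul_sqrt_mul_pow hn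
    _ = exp 1 * √n * (n / exp 1) ^ (n - k) * (n / exp 1) ^ k := by
      rw [mul_assoc _ ((n / exp 1 : ℝ) ^ (n - k)), ← pow_add, Nat.sub_add_cancel hk]
    _ ≤ exp 1 * √n * (n / exp 1) ^ (n - k) * (n : ℝ) ^ k := by gcongr

end Stirling

theorem stmt_16_general (i j : ℕ) (hij : i ≤ j - 3) (hj : 3 ≤ j) :
    ((j.factorial : ℝ) ^ 2 * ((2 * i).factorial : ℝ)
        / (((i.factorial : ℝ)) ^ 2 * (((j + i).factorial : ℝ)) * (j : ℝ) ^ 2)) ≤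
      Real.sqrt 2 * Real.exp 1 * 4 ^ i * Real.sqrt j * ((j : ℝ) / Real.exp 1) ^ (j - i - 2) := by
  have hcentral : ((2 * i)! : ℝ) ≤ 4 ^ i * (i ! : ℝ) ^ 2 := by
    exact_mod_cast factorial_two_mul_le_four_pow_mul_sq i
  have hshift : (j ! : ℝ) * (j : ℝ) ^ i ≤ ((j + i)! : ℝ) := by
    exact_mod_cast factorial_mul_pow_le_factorial_add j i
  have hstirling : (j ! : ℝ) ≤ exp 1 * √j * (j / exp 1) ^ (j - i - 2) * (j : ℝ) ^ (i + 2) := by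
    rw [Nat.sub_sub]
    exact Stirling.factorial_le_exp_one_mul_sqrt_mul_pow_sub_mul_pow (by omega) (by omega)
  set X : ℝ := exp 1 * √j * (j / exp 1) ^ (j - i - 2)
  have hsqrt2 : (1 : ℝ) ≤ √2 := Real.one_le_sqrt.mpr one_le_two
  rw [div_le_iff₀ (by positivity)]
  calc (j ! : ℝ) ^ 2 * (2 * i)! ≤ (j ! : ℝ) ^ 2 * (4 ^ i * (i ! : ℝ) ^ 2) := by gcongr
    _ = 4 ^ i * (i ! : ℝ) ^ 2 * j ! * j ! := by ring
    _ ≤ 4 ^ i * (i ! : ℝ) ^ 2 * j ! * (X * (j : ℝ) ^ (i + 2)) := by gcongr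
    _ = 4 ^ i * X * ((i ! : ℝ) ^ 2 * (j ! * (j : ℝ) ^ i) * (j : ℝ) ^ 2) := by ring
    _ ≤ √2 * 4 ^ i * X * ((i ! : ℝ) ^ 2 * (j + i)! * (j : ℝ) ^ 2) := by
      gcongr
      exact le_mul_of_one_le_left (by positivity) hsqrt2
    _ = _ := by ring

theorem stmt_16 (i j : ℕ) (hi : 1 ≤ i) (hij : i ≤ j - 3) (hj : 3 ≤ j) :
    ((j.factorial : ℝ) ^ 2 * ((2 * i).factorial : ℝ)
        / (((i.factorial : ℝ)) ^ 2 * (((j + i).factorial : ℝ)) * (j : ℝ) ^ 2)) ≤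
      Real.sqrt 2 * Real.exp 1 * 4 ^ i * Real.sqrt j * ((j : ℝ) / Real.exp 1) ^ (j - i - 2) :=
  stmt_16_general i j hij hj
end

section
/- Let j = j(t) be positive-integer-valued with j(t) → ∞ and j(t) = o(t) as t → ∞, and let A(i,j) = (j!)²(2i)!/((i!)²(j+i)!·j²). Then lim_{t→∞} Σ_{i=0}^{j(t)-3} A(i,j(t))/t^{j(t)-i-2} = 0. -/
/-!
Consecutive terms satisfy `A(i, k) ≤ k · A(i + 1, k)`, so once `k ≤ t / 2` the sum is dominated by
its last term `A(k - 3, k) / t` times a geometric series of ratio `k / t ≤ 1 / 2`. The last term is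
`((k - 1)(k - 2))² / ((2k - 5)(2k - 4)(2k - 3)) ≤ k`, so the whole sum is at most `2 k / t`, which
tends to `0` because `k = o(t)`.
-/

open Filter Asymptotics Finset
open scoped Nat

lemma le_pow_mul_of_le_mul_succ {a : ℕ → ℝ} {c : ℝ} {n : ℕ} (hc : 0 ≤ c)
    (h : ∀ i < n, a i ≤ c * a (i + 1)) {d : ℕ} (hd : d ≤ n) :
    a (n - d) ≤ c ^ d * a n := by
  induction d with
  | zero => simp
  | succ d ih =>
    have hstep := h (n - (d + 1)) (by omega)
    rw [show n - (d + 1) + 1 = n - d by omega] at hstep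
    calc a (n - (d + 1)) ≤ c * a (n - d) := hstep
      _ ≤ c * (c ^ d * a n) := by gcongr; exact ih (by omega)
      _ = c ^ (d + 1) * a n := by ring

lemma sum_div_pow_le_of_le_mul_succ {a : ℕ → ℝ} {c t : ℝ} {n : ℕ} (hc : 0 ≤ c) (ht : 0 < t)
    (hct : c ≤ t / 2) (han : 0 ≤ a n) (h : ∀ i < n, a i ≤ c * a (i + 1)) :
    ∑ i ∈ range (n + 1), a i / t ^ (n + 1 - i) ≤ 2 * a n / t := by
  have hratio : c / t ≤ 1 / 2 := by rw [div_le_iff₀ ht]; linarith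
  calc ∑ i ∈ range (n + 1), a i / t ^ (n + 1 - i)
      = ∑ d ∈ range (n + 1), a (n - d) / t ^ (d + 1) := by
        rw [← sum_range_reflect]
        refine sum_congr rfl fun d hd => ?_
        rw [mem_range] at hd
        rw [show n + 1 - 1 - d = n - d by omega, show n + 1 - (n - d) = d + 1 by omega]
    _ ≤ ∑ d ∈ range (n + 1), (c / t) ^ d * (a n / t) := by
        refine sum_le_sum fun d hd => ?_
        rw [mem_range] at hd
        calc a (n - d) / t ^ (d + 1) ≤ c ^ d * a n / t ^ (d + 1) := by
              gcongr; exact le_pow_mul_of_le_mul_succ hc h (by omega)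
          _ = (c / t) ^ d * (a n / t) := by rw [div_pow, pow_succ]; ring
    _ = (∑ d ∈ range (n + 1), (c / t) ^ d) * (a n / t) := by rw [sum_mul]
    _ ≤ (∑ d ∈ range (n + 1), (1 / 2 : ℝ) ^ d) * (a n / t) := by
        gcongr
    _ ≤ 2 * (a n / t) := by gcongr; exact sum_geometric_two_le _
    _ = 2 * a n / t := by ring

noncomputable def coeffA (i k : ℕ) : ℝ :=
  ((k ! : ℝ) ^ 2 * ((2 * i)! : ℝ)) / ((i ! : ℝ) ^ 2 * ((k + i)! : ℝ) * (k : ℝ) ^ 2)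

lemma coeffA_nonneg (i k : ℕ) : 0 ≤ coeffA i k := by
  unfold coeffA; positivity

lemma coeffA_le_mul_coeffA_succ {i k : ℕ} (hik : i + 1 ≤ k) :
    coeffA i k ≤ k * coeffA (i + 1) k := by
  have hi : ((i + 1)! : ℝ) = (i + 1) * i ! := by push_cast [Nat.factorial_succ]; ring
  have hki : ((k + (i + 1))! : ℝ) = (k + i + 1) * (k + i)! := by
    rw [← add_assoc, Nat.factorial_succ]; push_cast; ring
  have h2i : ((2 * (i + 1))! : ℝ) = (2 * i + 2) * (2 * i + 1) * (2 * i)! := by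
    rw [show 2 * (i + 1) = 2 * i + 1 + 1 by ring, Nat.factorial_succ, Nat.factorial_succ]
    push_cast; ring
  have hk : (0 : ℝ) < k := by exact_mod_cast (show 0 < k by omega)
  have hik' : (i : ℝ) + 1 ≤ k := by exact_mod_cast hik
  unfold coeffA
  rw [hi, hki, h2i, ← mul_div_assoc, div_le_div_iff₀ (by positivity) (by positivity)]
  -- the ratio `coeffA i k / coeffA (i + 1) k` is `(i + 1)(k + i + 1) / (2 (2i + 1)) ≤ k`
  have key : ((i : ℝ) + 1) * (k + i + 1) ≤ k * (2 * (2 * i + 1)) := by nlinarith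
  have hpos : (0 : ℝ) ≤ (k ! : ℝ) ^ 2 * (2 * i)! * (i ! : ℝ) ^ 2 * (k + i)! * k ^ 2 * (i + 1) := by
    positivity
  nlinarith [mul_le_mul_of_nonneg_left key hpos]

lemma coeffA_sub_three_le {k : ℕ} (hk : 3 ≤ k) : coeffA (k - 3) k ≤ k := by
  obtain ⟨m, rfl⟩ : ∃ m, k = m + 3 := ⟨k - 3, by omega⟩
  rw [show m + 3 - 3 = m by omega]
  have hk : ((m + 3)! : ℝ) = (m + 3) * (m + 2) * (m + 1) * m ! := by
    push_cast [Nat.factorial_succ]; ring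
  have hki : ((m + 3 + m)! : ℝ) = (2 * m + 3) * (2 * m + 2) * (2 * m + 1) * (2 * m)! := by
    rw [show m + 3 + m = 2 * m + 1 + 1 + 1 by ring]
    push_cast [Nat.factorial_succ]; ring
  have hm := m.factorial_pos
  have h2m := (2 * m).factorial_pos
  unfold coeffA
  rw [hk, hki, div_le_iff₀ (by positivity)]
  have key : (((m : ℝ) + 2) * (m + 1)) ^ 2 ≤ (m + 3) * ((2 * m + 3) * (2 * m + 2) * (2 * m + 1)) := by
    nlinarith [(m.cast_nonneg : (0 : ℝ) ≤ m)]
  have hpos : (0 : ℝ) ≤ (m ! : ℝ) ^ 2 * (2 * m)! * (m + 3) ^ 2 := by positivity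
  push_cast
  nlinarith [mul_le_mul_of_nonneg_left key hpos]

lemma sum_coeffA_div_pow_le {k : ℕ} {t : ℝ} (ht : 0 < t) (hkt : (k : ℝ) ≤ t / 2) :
    ∑ i ∈ range (k - 2), coeffA i k / t ^ (k - i - 2) ≤ 2 * k / t := by
  rcases lt_or_ge k 3 with hk | hk
  · rw [show k - 2 = 0 by omega, sum_range_zero]; positivity
  obtain ⟨n, rfl⟩ : ∃ n, k = n + 3 := ⟨k - 3, by omega⟩
  calc ∑ i ∈ range (n + 3 - 2), coeffA i (n + 3) / t ^ (n + 3 - i - 2)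
      = ∑ i ∈ range (n + 1), coeffA i (n + 3) / t ^ (n + 1 - i) := by
        refine sum_congr (by rw [show n + 3 - 2 = n + 1 by omega]) fun i _ => ?_
        rw [show n + 3 - i - 2 = n + 1 - i by omega]
    _ ≤ 2 * coeffA n (n + 3) / t :=
        sum_div_pow_le_of_le_mul_succ (Nat.cast_nonneg _) ht hkt (coeffA_nonneg _ _)
          fun i hi => coeffA_le_mul_coeffA_succ (by omega)
    _ ≤ 2 * ((n + 3 : ℕ) : ℝ) / t := by
        gcongr
        simpa using coeffA_sub_three_le (show 3 ≤ n + 3 by omega)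

theorem stmt_17_general (j : ℝ → ℕ)
    (hjo : (fun t : ℝ => (j t : ℝ)) =o[atTop] fun t : ℝ => t)
    (A : ℕ → ℕ → ℝ)
    (hA : ∀ i k : ℕ, A i k =
      ((k.factorial : ℝ) ^ 2 * ((2 * i).factorial : ℝ))
        / (((i.factorial : ℝ)) ^ 2 * (((k + i).factorial : ℝ)) * (k : ℝ) ^ 2)) :
    Tendsto (fun t : ℝ =>
        ∑ i ∈ Finset.range (j t - 2), A i (j t) / t ^ (j t - i - 2))
      atTop (nhds 0) := by
  obtain rfl : A = coeffA := funext₂ hA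
  have hdiv : Tendsto (fun t => (j t : ℝ) / t) atTop (nhds 0) := hjo.tendsto_div_nhds_zero
  have hsmall : ∀ᶠ t in atTop, 0 < t ∧ (j t : ℝ) ≤ t / 2 := by
    filter_upwards [eventually_gt_atTop 0,
      hdiv.eventually (eventually_le_nhds (by norm_num : (0 : ℝ) < 1 / 2))] with t ht hjt
    exact ⟨ht, by rwa [div_le_iff₀ ht, one_div_mul_eq_div] at hjt⟩
  have hbound : Tendsto (fun t => 2 * (j t : ℝ) / t) atTop (nhds 0) := by
    simpa [mul_div_assoc] using hdiv.const_mul 2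
  refine tendsto_of_tendsto_of_tendsto_of_le_of_le' tendsto_const_nhds hbound ?_ ?_
  · filter_upwards [hsmall] with t ⟨ht, _⟩
    exact sum_nonneg fun i _ => div_nonneg (coeffA_nonneg _ _) (by positivity)
  · filter_upwards [hsmall] with t ⟨ht, hjt⟩
    exact sum_coeffA_div_pow_le ht hjt

theorem stmt_17 (j : ℝ → ℕ)
    (hjtop : Tendsto (fun t : ℝ => (j t : ℝ)) atTop atTop)
    (hjo : (fun t : ℝ => (j t : ℝ)) =o[atTop] fun t : ℝ => t)
    (A : ℕ → ℕ → ℝ)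
    (hA : ∀ i k : ℕ, A i k =
      ((k.factorial : ℝ) ^ 2 * ((2 * i).factorial : ℝ))
        / (((i.factorial : ℝ)) ^ 2 * (((k + i).factorial : ℝ)) * (k : ℝ) ^ 2)) :
    Tendsto (fun t : ℝ =>
        ∑ i ∈ Finset.range (j t - 2), A i (j t) / t ^ (j t - i - 2))
      atTop (nhds 0) :=
  stmt_17_general j hjo A hA
end
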